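/- arXiv:1604.04618 — 5 statements merged into one kernel-verified Lean document; each statement's English description precedes it below -/
import Mathlib

section
/- Let f : {±1}^n → ℝ. Sample p uniformly from [−1,1] and then x ∈ {±1}^n with independent coordinates each of expectation p. Then E[f(x) · Σ_{i=1}^n (x_i − p) + (f(x) − x̄)²] ≥ 1/3, where x̄ = (1/n)Σ_i x_i. -/
/-!
Write `μ_p` for the density of `x ~ p^n`. Since `(1 - p²) ∂ₚ μ_p(x) = μ_p(x) ∑ᵢ (xᵢ - p)` and
`(1 - p²) μ_p` vanishes at `p = ±1`, integrating by parts in `p` turns the correlation term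
`E[f(x) ∑ᵢ (xᵢ - p)]` into `E[2p f(x)]`. Completing the square,
`2p f + (f - x̄)² = (f - x̄ + p)² + 2p x̄ - p² ≥ 2p x̄ - p²`, and `E[x̄ | p] = p`, so the
expectation is at least `E[p²] = 1/3`.
-/

open Finset

noncomputable section

def spin (b : Bool) : ℝ := if b then 1 else -1

lemma spin_sq (b : Bool) : spin b ^ 2 = 1 := by
  cases b <;> norm_num [spin]

def bitWeight (p : ℝ) (b : Bool) : ℝ := (1 + spin b * p) / 2

lemma sum_bitWeight (p : ℝ) : ∑ b, bitWeight p b = 1 := by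
  norm_num [Fintype.sum_bool, bitWeight, spin]
  ring

lemma sum_bitWeight_mul_spin (p : ℝ) : ∑ b, bitWeight p b * spin b = p := by
  norm_num [Fintype.sum_bool, bitWeight, spin]
  ring

lemma one_sub_sq_mul_spin_div_two (p : ℝ) (b : Bool) :
    (1 - p ^ 2) * (spin b / 2) = bitWeight p b * (spin b - p) := by
  unfold bitWeight
  linear_combination (-p / 2) * spin_sq b

variable {ι : Type*} [Fintype ι]

def biasedDensity (p : ℝ) (x : ι → Bool) : ℝ := ∏ i, bitWeight p (x i)

lemma biasedDensity_nonneg {p : ℝ} (hp : p ∈ Set.Icc (-1) 1) (x : ι → Bool) :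
    0 ≤ biasedDensity p x :=
  prod_nonneg fun i _ => by
    unfold bitWeight spin
    cases x i <;> norm_num <;> linarith [hp.1, hp.2]

@[fun_prop]
lemma continuous_biasedDensity (x : ι → Bool) : Continuous fun p => biasedDensity p x := by
  unfold biasedDensity bitWeight
  fun_prop

lemma sum_biasedDensity [DecidableEq ι] (p : ℝ) : ∑ x : ι → Bool, biasedDensity p x = 1 := by
  simp only [biasedDensity, ← Fintype.prod_sum fun _ => bitWeight p, sum_bitWeight,
    prod_const_one]

lemma sum_biasedDensity_mul_spin [DecidableEq ι] (p : ℝ) (j : ι) :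
    ∑ x : ι → Bool, biasedDensity p x * spin (x j) = p := by
  have hfactor : ∀ x : ι → Bool, biasedDensity p x * spin (x j) =
      ∏ i, bitWeight p (x i) * (if i = j then spin (x i) else 1) := fun x => by
    rw [prod_mul_distrib, prod_ite_eq', if_pos (mem_univ j), biasedDensity]
  have hcoord : ∀ i, ∑ b, bitWeight p b * (if i = j then spin b else 1) =
      if i = j then p else 1 := fun i => by
    split_ifs
    · exact sum_bitWeight_mul_spin p
    · simpa only [mul_one] using sum_bitWeight p
  simp only [hfactor,
    ← Fintype.prod_sum fun i b => bitWeight p b * (if i = j then spin b else 1), hcoord,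
    prod_ite_eq', if_pos (mem_univ j)]

lemma sum_biasedDensity_mul_mean [DecidableEq ι] [Nonempty ι] (p : ℝ) :
    ∑ x : ι → Bool, biasedDensity p x * ((∑ i, spin (x i)) / Fintype.card ι) = p := by
  have hcard : (Fintype.card ι : ℝ) ≠ 0 := Nat.cast_ne_zero.mpr Fintype.card_ne_zero
  simp_rw [mul_div_assoc', ← sum_div, mul_sum]
  rw [sum_comm]
  simp only [sum_biasedDensity_mul_spin, sum_const, card_univ, nsmul_eq_mul]
  field_simp

lemma hasDerivAt_one_sub_sq_mul_biasedDensity (x : ι → Bool) (p : ℝ) :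
    HasDerivAt (fun q => (1 - q ^ 2) * biasedDensity q x)
      (biasedDensity p x * ∑ i, (spin (x i) - p) - 2 * p * biasedDensity p x) p := by
  classical
  have hweight : ∀ i, HasDerivAt (fun q => bitWeight q (x i)) (spin (x i) / 2) p := fun i =>
    ((((hasDerivAt_id p).const_mul (spin (x i))).const_add 1).div_const 2).congr_deriv
      (by simp)
  have hdensity := HasDerivAt.fun_finsetProd (u := univ) fun i _ => hweight i
  have hscore : (1 - p ^ 2) * ∑ i, (∏ j ∈ univ.erase i, bitWeight p (x j)) • (spin (x i) / 2) =
      biasedDensity p x * ∑ i, (spin (x i) - p) := by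
    simp only [mul_sum, smul_eq_mul, biasedDensity]
    refine sum_congr rfl fun i _ => ?_
    rw [← mul_prod_erase _ _ (mem_univ i), mul_left_comm, one_sub_sq_mul_spin_div_two]
    ring
  refine (((hasDerivAt_pow 2 p).const_sub 1).mul hdensity).congr_deriv ?_
  rw [← hscore, biasedDensity]
  ring

lemma integral_sum_biasedDensity_mul_score_add [DecidableEq ι] (F H : (ι → Bool) → ℝ) :
    ∫ p in (-1 : ℝ)..1, ∑ x, biasedDensity p x * (F x * ∑ i, (spin (x i) - p) + H x) =
      ∫ p in (-1 : ℝ)..1, ∑ x, biasedDensity p x * (2 * p * F x + H x) := by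
  have hderiv : ∀ p ∈ Set.uIcc (-1 : ℝ) 1, HasDerivAt
      (fun q => ∑ x, F x * ((1 - q ^ 2) * biasedDensity q x))
      (∑ x, biasedDensity p x * (F x * ∑ i, (spin (x i) - p) + H x) -
        ∑ x, biasedDensity p x * (2 * p * F x + H x)) p := fun p _ => by
    rw [← sum_sub_distrib]
    refine (HasDerivAt.fun_sum (u := univ) fun x _ =>
      (hasDerivAt_one_sub_sq_mul_biasedDensity x p).const_mul (F x)).congr_deriv ?_
    exact sum_congr rfl fun x _ => by ring
  have hint : ∀ g : ℝ → ℝ, Continuous g → IntervalIntegrable g MeasureTheory.volume (-1) 1 :=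
    fun g hg => hg.intervalIntegrable _ _
  rw [← sub_eq_zero, ← intervalIntegral.integral_sub (hint _ (by fun_prop)) (hint _ (by fun_prop)),
    intervalIntegral.integral_eq_sub_of_hasDerivAt hderiv (hint _ (by fun_prop))]
  norm_num

lemma sq_le_sum_biasedDensity_mul [DecidableEq ι] [Nonempty ι] {p : ℝ} (hp : p ∈ Set.Icc (-1) 1)
    (f : (ι → Bool) → ℝ) :
    p ^ 2 ≤ ∑ x, biasedDensity p x *
      (2 * p * f x + (f x - (∑ i, spin (x i)) / Fintype.card ι) ^ 2) := by
  set mean : (ι → Bool) → ℝ := fun x => (∑ i, spin (x i)) / Fintype.card ι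
  have hlinear : ∑ x, biasedDensity p x * (2 * p * mean x - p ^ 2) =
      2 * p * ∑ x, biasedDensity p x * mean x - p ^ 2 * ∑ x : ι → Bool, biasedDensity p x := by
    rw [mul_sum, mul_sum, ← sum_sub_distrib]
    exact sum_congr rfl fun x _ => by ring
  calc p ^ 2 = ∑ x, biasedDensity p x * (2 * p * mean x - p ^ 2) := by
        rw [hlinear, sum_biasedDensity_mul_mean, sum_biasedDensity]
        ring
    _ ≤ _ := sum_le_sum fun x _ => mul_le_mul_of_nonneg_left
        (by nlinarith [sq_nonneg (f x - mean x + p)]) (biasedDensity_nonneg hp x)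

/-- Proposition: correlation/error tradeoff with empirical mean:
For `f : {±1}^n → ℝ`, sampling `p` uniform in `[-1,1]` and `x ~ p^n`,
`E[f(x)·∑_i (x_i - p) + (f(x) - x̄)²] ≥ 1/3`, where `x̄ = (1/n)∑_i x_i`. -/
theorem stmt2 (n : ℕ) (hn : 0 < n) (f : (Fin n → Bool) → ℝ) :
    (1 / 3 : ℝ) ≤ (1 / 2) * ∫ p in (-1 : ℝ)..1,
      ∑ x : Fin n → Bool,
        (∏ i, (1 + (if x i then (1 : ℝ) else -1) * p) / 2) *
          (f x * (∑ i, ((if x i then (1 : ℝ) else -1) - p)) +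
            (f x - (∑ i, (if x i then (1 : ℝ) else -1)) / n) ^ 2) := by
  have : Nonempty (Fin n) := ⟨⟨0, hn⟩⟩
  change (1 / 3 : ℝ) ≤ 1 / 2 * ∫ p in (-1 : ℝ)..1, ∑ x, biasedDensity p x *
    (f x * ∑ i, (spin (x i) - p) + (f x - (∑ i, spin (x i)) / n) ^ 2)
  rw [integral_sum_biasedDensity_mul_score_add]
  calc (1 / 3 : ℝ) = 1 / 2 * ∫ p in (-1 : ℝ)..1, p ^ 2 := by
        rw [integral_pow]
        norm_num
    _ ≤ _ := by
      gcongr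
      refine intervalIntegral.integral_mono_on (by norm_num)
        ((continuous_pow 2).intervalIntegrable _ _) (Continuous.intervalIntegrable (by fun_prop) _ _)
        fun p hp => ?_
      simpa only [Fintype.card_fin] using sq_le_sum_biasedDensity_mul hp f

end
end

section
/- Let f : {±1}^n → [−1,1]. Sample p uniformly from [−1,1] and x ∈ {±1}^n with independent coordinates each of expectation p. Then E[f(x) · Σ_{i=1}^n (x_i − p) + 2|f(x) − x̄|] ≥ 1/3, where x̄ = (1/n)Σ_i x_i. -/
/-!
The probability of `x` under `p^n` is `μ_x(p) = ∏ᵢ (1 + xᵢ p) / 2` (`cubeWeight x p`). Since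
`(1 - p²) · d/dp μ_x(p) = μ_x(p) · ∑ᵢ (xᵢ - p)` and `(1 - p²) μ_x(p)` vanishes at `p = ±1`,
integrating by parts turns `E[f(x) · ∑ᵢ (xᵢ - p)]` into `E[2p f(x)]`. As `|p| ≤ 1`,
`2p f(x) + 2|f(x) - x̄| ≥ 2p x̄`, and `E[2p x̄] = E[2p²] = 2/3`.
-/

open Finset

noncomputable section

variable {ι : Type*} [Fintype ι]

def toPM (b : Bool) : ℝ := if b then 1 else -1

theorem toPM_mul_self (b : Bool) : toPM b * toPM b = 1 := by
  cases b <;> simp [toPM]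

def cubeWeight (x : ι → Bool) (p : ℝ) : ℝ := ∏ i, (1 + toPM (x i) * p) / 2

@[fun_prop]
theorem continuous_cubeWeight (x : ι → Bool) : Continuous (cubeWeight x) :=
  continuous_finsetProd _ fun i _ => by fun_prop

theorem cubeWeight_nonneg (x : ι → Bool) {p : ℝ} (hp : p ∈ Set.Icc (-1 : ℝ) 1) :
    0 ≤ cubeWeight x p :=
  prod_nonneg fun i _ => by
    obtain ⟨h₁, h₂⟩ := hp
    cases x i <;> simp only [toPM] <;> norm_num <;> linarith

theorem hasDerivAt_one_sub_sq_mul_cubeWeight (x : ι → Bool) (p : ℝ) :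
    HasDerivAt (fun q => (1 - q ^ 2) * cubeWeight x q)
      (cubeWeight x p * ∑ i, (toPM (x i) - p) - 2 * p * cubeWeight x p) p := by
  classical
  have hfactor (i : ι) :
      HasDerivAt (fun q => (1 + toPM (x i) * q) / 2) (toPM (x i) / 2) p := by
    simpa using (((hasDerivAt_id p).const_mul (toPM (x i))).const_add 1).div_const 2
  have hprod : HasDerivAt (cubeWeight x)
      (∑ i, (∏ j ∈ univ.erase i, (1 + toPM (x j) * p) / 2) * (toPM (x i) / 2)) p :=
    HasDerivAt.fun_finsetProd fun i _ => hfactor i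
  refine ((hasDerivAt_pow 2 p).const_sub 1 |>.mul hprod).congr_deriv ?_
  -- `(1 - p²) ε / 2 = (1 + ε p) / 2 · (ε - p)` because `ε² = 1`
  have hcoord (i : ι) : (1 - p ^ 2) * ((∏ j ∈ univ.erase i, (1 + toPM (x j) * p) / 2)
      * (toPM (x i) / 2)) = cubeWeight x p * (toPM (x i) - p) := by
    rw [cubeWeight, ← mul_prod_erase univ (fun j => (1 + toPM (x j) * p) / 2) (mem_univ i)]
    linear_combination (-(∏ j ∈ univ.erase i, (1 + toPM (x j) * p) / 2) * p / 2)
      * toPM_mul_self (x i)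
  simp only [mul_sum, hcoord]
  ring

theorem integral_cubeWeight_mul_score (x : ι → Bool) (c d : ℝ) :
    ∫ p in (-1 : ℝ)..1, cubeWeight x p * (c * ∑ i, (toPM (x i) - p) + d)
      = ∫ p in (-1 : ℝ)..1, cubeWeight x p * (2 * p * c + d) := by
  have hboundary := intervalIntegral.integral_eq_sub_of_hasDerivAt
    (a := -1) (b := 1) (fun p _ => (hasDerivAt_one_sub_sq_mul_cubeWeight x p).const_mul c)
    (Continuous.intervalIntegrable (by fun_prop) _ _)
  simp only [one_pow, neg_one_sq, sub_self, zero_mul, mul_zero] at hboundary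
  rw [← sub_eq_zero, ← intervalIntegral.integral_sub
    (Continuous.intervalIntegrable (by fun_prop) _ _)
    (Continuous.intervalIntegrable (by fun_prop) _ _), ← hboundary]
  congr 1 with p
  ring

theorem sum_cubeWeight_mul_toPM [DecidableEq ι] (p : ℝ) (k : ι) :
    ∑ x : ι → Bool, cubeWeight x p * toPM (x k) = p := by
  have hfactor (x : ι → Bool) : cubeWeight x p * toPM (x k)
      = ∏ i, (1 + toPM (x i) * p) / 2 * if i = k then toPM (x i) else 1 := by
    rw [prod_mul_distrib, Fintype.prod_ite_eq' k, cubeWeight]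
  simp_rw [hfactor]
  rw [← Fintype.prod_sum fun i b => (1 + toPM b * p) / 2 * if i = k then toPM b else 1]
  simp only [Fintype.sum_bool]
  rw [prod_eq_single k fun i _ hi => by simp [hi, toPM]; ring]
  · simp [toPM]; ring
  · simp

theorem sum_cubeWeight_mul_sum_toPM [DecidableEq ι] (p : ℝ) :
    ∑ x : ι → Bool, cubeWeight x p * ∑ i, toPM (x i) = Fintype.card ι * p := by
  simp_rw [mul_sum]
  rw [sum_comm]
  simp [sum_cubeWeight_mul_toPM]

theorem mul_sub_le_abs_sub {p : ℝ} (hp : |p| ≤ 1) (a b : ℝ) : p * (a - b) ≤ |b - a| := by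
  calc p * (a - b) ≤ |p| * |a - b| := by rw [← abs_mul]; exact le_abs_self _
    _ ≤ |a - b| := mul_le_of_le_one_left (abs_nonneg _) hp
    _ = |b - a| := abs_sub_comm a b

theorem two_mul_sq_le_sum_cubeWeight_mul [DecidableEq ι] [Nonempty ι]
    (f : (ι → Bool) → ℝ) {p : ℝ} (hp : p ∈ Set.Icc (-1 : ℝ) 1) :
    2 * p ^ 2 ≤ ∑ x : ι → Bool,
      cubeWeight x p * (2 * p * f x + 2 * |f x - (∑ i, toPM (x i)) / Fintype.card ι|) := by
  have hcard : (Fintype.card ι : ℝ) ≠ 0 := by positivity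
  have habs : |p| ≤ 1 := abs_le.mpr hp
  calc 2 * p ^ 2
      = ∑ x : ι → Bool, cubeWeight x p * (2 * p * ((∑ i, toPM (x i)) / Fintype.card ι)) := by
        have := sum_cubeWeight_mul_sum_toPM (ι := ι) p
        simp_rw [mul_div_assoc', div_eq_mul_inv, ← sum_mul, mul_left_comm _ (2 * p), ← mul_sum,
          this]
        field_simp
    _ ≤ _ := by
        gcongr with x
        · exact cubeWeight_nonneg x hp
        · linarith [mul_sub_le_abs_sub habs ((∑ i, toPM (x i)) / Fintype.card ι) (f x)]

theorem four_thirds_le_integral_sum_cubeWeight_mul [DecidableEq ι] [Nonempty ι]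
    (f : (ι → Bool) → ℝ) :
    4 / 3 ≤ ∫ p in (-1 : ℝ)..1, ∑ x : ι → Bool, cubeWeight x p *
      (f x * ∑ i, (toPM (x i) - p) + 2 * |f x - (∑ i, toPM (x i)) / Fintype.card ι|) := by
  calc (4 / 3 : ℝ)
      = ∫ p in (-1 : ℝ)..1, 2 * p ^ 2 := by
        rw [intervalIntegral.integral_const_mul, integral_pow]
        norm_num
    _ ≤ ∫ p in (-1 : ℝ)..1, ∑ x : ι → Bool, cubeWeight x p *
          (2 * p * f x + 2 * |f x - (∑ i, toPM (x i)) / Fintype.card ι|) :=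
        intervalIntegral.integral_mono_on (by norm_num)
          (Continuous.intervalIntegrable (by fun_prop) _ _)
          (Continuous.intervalIntegrable (by fun_prop) _ _)
          fun p hp => two_mul_sq_le_sum_cubeWeight_mul f hp
    _ = _ := by
        rw [intervalIntegral.integral_finsetSum fun x _ =>
            Continuous.intervalIntegrable (by fun_prop) _ _,
          intervalIntegral.integral_finsetSum fun x _ =>
            Continuous.intervalIntegrable (by fun_prop) _ _]
        simp only [integral_cubeWeight_mul_score]

end

theorem stmt4_general (n : ℕ) (hn : 0 < n) (f : (Fin n → Bool) → ℝ) :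
    (1 / 3 : ℝ) ≤ (1 / 2) * ∫ p in (-1 : ℝ)..1,
      ∑ x : Fin n → Bool,
        (∏ i, (1 + (if x i then (1 : ℝ) else -1) * p) / 2) *
          (f x * (∑ i, ((if x i then (1 : ℝ) else -1) - p)) +
            2 * |f x - (∑ i, (if x i then (1 : ℝ) else -1)) / n|) := by
  have : Nonempty (Fin n) := ⟨⟨0, hn⟩⟩
  have hbound := four_thirds_le_integral_sum_cubeWeight_mul f
  rw [Fintype.card_fin] at hbound
  change _ ≤ _ * ∫ p in (-1 : ℝ)..1, ∑ x : Fin n → Bool, cubeWeight x p *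
    (f x * ∑ i, (toPM (x i) - p) + 2 * |f x - (∑ i, toPM (x i)) / n|)
  linarith

/-- Fingerprinting Lemma: For `f : {±1}^n → [-1,1]`,
sampling `p` uniform in `[-1,1]` and `x ~ p^n`,
`E[f(x)·∑_i (x_i - p) + 2|f(x) - x̄|] ≥ 1/3`, where `x̄ = (1/n)∑_i x_i`. -/
theorem stmt4 (n : ℕ) (hn : 0 < n) (f : (Fin n → Bool) → ℝ)
    (hf : ∀ x, |f x| ≤ 1) :
    (1 / 3 : ℝ) ≤ (1 / 2) * ∫ p in (-1 : ℝ)..1,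
      ∑ x : Fin n → Bool,
        (∏ i, (1 + (if x i then (1 : ℝ) else -1) * p) / 2) *
          (f x * (∑ i, ((if x i then (1 : ℝ) else -1) - p)) +
            2 * |f x - (∑ i, (if x i then (1 : ℝ) else -1)) / n|) :=
  stmt4_general n hn f
end

section
/- Fix 0 ≤ a, b ≤ 1 and vectors x, y¹, …, y^k ∈ {±1}^n with ⟨y^j, x⟩ ≥ a·n for all j and |⟨y^j, y^{j'}⟩| ≤ b·n for all j ≠ j'. Let x̃ = sign(Σ_{j=1}^k y^j) ∈ {±1}^n (coordinate-wise sign, with any fixed tie-breaking). Then ⟨x̃, x⟩ ≥ (1 − 2/(a²k) − 2(b − a²)/a²) · n. -/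
/-!
Write `S = ∑ⱼ yʲ` and `c = a k`. Coordinatewise, `x̃ᵢ xᵢ ≥ 1 - 2 (c - Sᵢ xᵢ)² / c²`: when the
sign is wrong, `Sᵢ xᵢ ≤ 0` and so `(c - Sᵢ xᵢ)² ≥ c²`. Summing, it remains to bound
`∑ᵢ (c - Sᵢ xᵢ)² = c² n - 2c ⟨S, x⟩ + ‖S‖²`, and the hypotheses give the first and second moments
`⟨S, x⟩ ≥ k a n` and `‖S‖² = ∑_{j,j'} ⟨yʲ, yʲ'⟩ ≤ k n + k² b n`.
-/

open Finset

lemma one_sub_two_mul_sq_div_le_sign_mul {x c : ℝ} (hx : x = 1 ∨ x = -1) (hc : 0 < c) (s : ℝ) :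
    1 - 2 * (c - s * x) ^ 2 / c ^ 2 ≤ (if 0 ≤ s then 1 else -1) * x := by
  rw [mul_div_assoc]
  have hc2 : 0 < c ^ 2 := by positivity
  have hq : 0 ≤ (c - s * x) ^ 2 / c ^ 2 := by positivity
  rcases hx with rfl | rfl <;> split_ifs with hs
  · linarith
  · have : 1 ≤ (c - s * 1) ^ 2 / c ^ 2 := (one_le_div hc2).mpr (by nlinarith)
    linarith
  · have : 1 ≤ (c - s * -1) ^ 2 / c ^ 2 := (one_le_div hc2).mpr (by nlinarith)
    linarith
  · linarith

section SignVectors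

variable {ι J : Type*} [Fintype ι] [Fintype J]

lemma sum_mul_self_eq_card {v : ι → ℝ} (hv : ∀ i, v i = 1 ∨ v i = -1) :
    ∑ i, v i * v i = Fintype.card ι := by
  have h : ∀ i, v i * v i = 1 := fun i => by rcases hv i with h | h <;> simp [h]
  simp [h]

lemma sum_sq_sub_mul_eq {x : ι → ℝ} (hx : ∀ i, x i = 1 ∨ x i = -1) (c : ℝ) (s : ι → ℝ) :
    ∑ i, (c - s i * x i) ^ 2
      = c ^ 2 * Fintype.card ι - 2 * c * ∑ i, s i * x i + ∑ i, s i ^ 2 := by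
  have hxx : ∀ i, x i * x i = 1 := fun i => by rcases hx i with h | h <;> simp [h]
  have h : ∀ i, (c - s i * x i) ^ 2 = c ^ 2 - 2 * c * (s i * x i) + s i ^ 2 := fun i => by
    linear_combination s i ^ 2 * hxx i
  simp only [h, sum_add_distrib, sum_sub_distrib, ← mul_sum, sum_const, card_univ, nsmul_eq_mul]
  ring

lemma sum_sq_sum_eq (y : J → ι → ℝ) :
    ∑ i, (∑ j, y j i) ^ 2 = ∑ j, ∑ j', ∑ i, y j i * y j' i := by
  simp only [sq, sum_mul_sum]
  rw [sum_comm]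
  exact sum_congr rfl fun j _ => sum_comm

lemma sum_sq_sum_le {y : J → ι → ℝ} {b : ℝ} (hy : ∀ j i, y j i = 1 ∨ y j i = -1) (hb : 0 ≤ b)
    (horth : ∀ j j', j ≠ j' → |∑ i, y j i * y j' i| ≤ b * Fintype.card ι) :
    ∑ i, (∑ j, y j i) ^ 2
      ≤ Fintype.card J * Fintype.card ι + Fintype.card J ^ 2 * (b * Fintype.card ι) := by
  classical
  have hpair : ∀ j j', ∑ i, y j i * y j' i
      ≤ b * Fintype.card ι + if j = j' then (Fintype.card ι : ℝ) else 0 := by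
    intro j j'
    split_ifs with h
    · subst h
      rw [sum_mul_self_eq_card (hy j)]
      have : 0 ≤ b * Fintype.card ι := by positivity
      linarith
    · linarith [le_abs_self (∑ i, y j i * y j' i), horth j j' h]
  calc ∑ i, (∑ j, y j i) ^ 2 = ∑ j, ∑ j', ∑ i, y j i * y j' i := sum_sq_sum_eq y
    _ ≤ ∑ j : J, ∑ j' : J, (b * Fintype.card ι + if j = j' then (Fintype.card ι : ℝ) else 0) :=
        sum_le_sum fun j _ => sum_le_sum fun j' _ => hpair j j'
    _ = _ := by
        simp only [sum_add_distrib, sum_const, card_univ, nsmul_eq_mul, sum_ite_eq, mem_univ,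
          if_true]
        ring

lemma card_mul_le_sum_sum_mul {x : ι → ℝ} {y : J → ι → ℝ} {a : ℝ}
    (hcorr : ∀ j, a * Fintype.card ι ≤ ∑ i, y j i * x i) :
    Fintype.card J * (a * Fintype.card ι) ≤ ∑ i, (∑ j, y j i) * x i := by
  simp only [sum_mul]
  rw [sum_comm]
  simpa using sum_le_sum fun j (_ : j ∈ univ) => hcorr j

lemma sum_sq_sub_sum_mul_le {x : ι → ℝ} {y : J → ι → ℝ} {a b : ℝ} (ha : 0 ≤ a) (hb : 0 ≤ b)
    (hx : ∀ i, x i = 1 ∨ x i = -1) (hy : ∀ j i, y j i = 1 ∨ y j i = -1)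
    (hcorr : ∀ j, a * Fintype.card ι ≤ ∑ i, y j i * x i)
    (horth : ∀ j j', j ≠ j' → |∑ i, y j i * y j' i| ≤ b * Fintype.card ι) :
    ∑ i, (a * Fintype.card J - (∑ j, y j i) * x i) ^ 2
      ≤ Fintype.card J * Fintype.card ι + Fintype.card J ^ 2 * (b * Fintype.card ι)
        - (a * Fintype.card J) ^ 2 * Fintype.card ι := by
  rw [sum_sq_sub_mul_eq hx]
  have hfirst := mul_le_mul_of_nonneg_left (card_mul_le_sum_sum_mul hcorr)
    (by positivity : (0 : ℝ) ≤ 2 * (a * Fintype.card J))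
  nlinarith [sum_sq_sum_le hy hb horth]

end SignVectors

theorem stmt5_general (n k : ℕ) (hk : 0 < k) (a b : ℝ)
    (ha0 : 0 < a) (hb0 : 0 ≤ b)
    (x : Fin n → ℝ) (y : Fin k → Fin n → ℝ)
    (hx : ∀ i, x i = 1 ∨ x i = -1)
    (hy : ∀ j i, y j i = 1 ∨ y j i = -1)
    (hcorr : ∀ j, a * n ≤ ∑ i, y j i * x i)
    (horth : ∀ j j', j ≠ j' → |∑ i, y j i * y j' i| ≤ b * n) :
    (1 - 2 / (a ^ 2 * k) - 2 * (b - a ^ 2) / a ^ 2) * n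
      ≤ ∑ i, (if 0 ≤ ∑ j, y j i then (1 : ℝ) else -1) * x i := by
  have hc : 0 < a * k := mul_pos ha0 (Nat.cast_pos.mpr hk)
  have hpoint := fun i => one_sub_two_mul_sq_div_le_sign_mul (hx i) hc (∑ j, y j i)
  have hmoment := sum_sq_sub_sum_mul_le ha0.le hb0 hx hy
    (by simpa using hcorr) (by simpa using horth)
  simp only [Fintype.card_fin] at hmoment
  calc (1 - 2 / (a ^ 2 * k) - 2 * (b - a ^ 2) / a ^ 2) * n
      = n - 2 / (a * k) ^ 2 * (k * n + k ^ 2 * (b * n) - (a * k) ^ 2 * n) := by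
        field_simp; ring
    _ ≤ n - 2 / (a * k) ^ 2 * ∑ i, (a * k - (∑ j, y j i) * x i) ^ 2 := by gcongr
    _ = ∑ i, (1 - 2 * (a * k - (∑ j, y j i) * x i) ^ 2 / (a * k) ^ 2) := by
        simp only [sum_sub_distrib, sum_const, card_univ, Fintype.card_fin, nsmul_eq_mul, mul_one,
          mul_sum]
        congr 1
        exact sum_congr rfl fun i _ => by ring
    _ ≤ _ := sum_le_sum fun i _ => hpoint i

/-- Reconstruction Lemma: For `0 < a ≤ 1`, `0 ≤ b ≤ 1`, and
vectors `x, y¹, …, y^k ∈ {±1}^n` with `⟨y^j, x⟩ ≥ a·n` for all `j` and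
`|⟨y^j, y^{j'}⟩| ≤ b·n` for `j ≠ j'`, the coordinate-wise sign
`x̃ = sign(∑_j y^j)` satisfies `⟨x̃, x⟩ ≥ (1 - 2/(a²k) - 2(b - a²)/a²)·n`. -/
theorem stmt5 (n k : ℕ) (hk : 0 < k) (a b : ℝ)
    (ha0 : 0 < a) (ha1 : a ≤ 1) (hb0 : 0 ≤ b) (hb1 : b ≤ 1)
    (x : Fin n → ℝ) (y : Fin k → Fin n → ℝ)
    (hx : ∀ i, x i = 1 ∨ x i = -1)
    (hy : ∀ j i, y j i = 1 ∨ y j i = -1)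
    (hcorr : ∀ j, a * n ≤ ∑ i, y j i * x i)
    (horth : ∀ j j', j ≠ j' → |∑ i, y j i * y j' i| ≤ b * n) :
    (1 - 2 / (a ^ 2 * k) - 2 * (b - a ^ 2) / a ^ 2) * n
      ≤ ∑ i, (if 0 ≤ ∑ j, y j i then (1 : ℝ) else -1) * x i :=
  stmt5_general n k hk a b ha0 hb0 x y hx hy hcorr horth
end

section
/- Let ν be a Laplace random variable with scale λ > 0, and let [a,b] ⊆ [a',b'] be intervals with η ≥ (b'−a') − (b−a) ≥ 0. Then P[ν ∈ [a',b']] ≤ (e^{η/λ} / (1 − e^{−(b−a)/(2λ)})) · P[ν ∈ [a,b]]. -/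
/-!
Write `[a', b'] = [a - u, b + v]` and `q = e^{-(b-a)/(2λ)}`. If `[a, b]` lies on one side of the
mode, say `0 ≤ a`, then `P[a', b'] ≤ P[a - u, ∞) ≤ e^{u/λ} P[a, ∞)` while
`P[a, b] = (1 - q²) P[a, ∞)`, and `1 - q ≤ 1 - q²`. If `a < 0 < b`, put `s = e^{a/(2λ)}` and
`t = e^{-b/(2λ)}`, so that `q = st`, `2 P[a, b] = 2 - s² - t²` and `2 P[a', b'] = 2 - αs² - βt²`
with `α, β ≤ 1` and `αβ e^{η/λ} ≥ 1`; the claim becomes a polynomial inequality in `s, t, α, β`,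
whose heart is `(1 - st) s² ≤ 2 - s² - t²` on the unit square.
-/

open Real

lemma sq_mul_two_sub_mul_add_sq_le_two {s t : ℝ} (hs₀ : 0 ≤ s) (hs₁ : s ≤ 1) (ht₀ : 0 ≤ t)
    (ht₁ : t ≤ 1) : s ^ 2 * (2 - s * t) + t ^ 2 ≤ 2 := by
  -- `2 - s²(2 - st) - t² = (1 - t)(2 - 2s²) + t(1 - s)(1 + s - s²) + t(1 - t)`
  nlinarith [mul_nonneg (sub_nonneg.2 ht₁) (sub_nonneg.2 (pow_le_one₀ hs₀ hs₁ (n := 2))),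
    mul_nonneg ht₀ (sub_nonneg.2 ht₁),
    mul_nonneg ht₀ (mul_nonneg (sub_nonneg.2 hs₁) (by nlinarith : (0 : ℝ) ≤ 1 + s - s ^ 2))]

lemma three_sub_le_of_one_le_mul {α β E : ℝ} (hα₀ : 0 < α) (hα₁ : α ≤ 1) (hβ₀ : 0 < β)
    (hβ₁ : β ≤ 1) (hE : 1 ≤ E * (α * β)) : 3 - α - β ≤ E := by
  have hαβ : (3 - α - β) * (α * β) ≤ 1 := by
    nlinarith [mul_nonneg (sub_nonneg.2 hα₁) (sub_nonneg.2 hβ₁),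
      mul_nonneg (mul_nonneg (sub_nonneg.2 hα₁) (sub_nonneg.2 hβ₁)) (add_nonneg hα₀.le hβ₀.le),
      mul_nonneg (sq_nonneg (1 - α)) hβ₀.le, mul_nonneg (sq_nonneg (1 - β)) hα₀.le]
  exact le_of_mul_le_mul_right (hαβ.trans hE) (mul_pos hα₀ hβ₀)

lemma one_sub_mul_mul_two_sub_le {s t α β E : ℝ} (hs₀ : 0 ≤ s) (hs₁ : s ≤ 1) (ht₀ : 0 ≤ t)
    (ht₁ : t ≤ 1) (hα₀ : 0 < α) (hα₁ : α ≤ 1) (hβ₀ : 0 < β) (hβ₁ : β ≤ 1)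
    (hE : 1 ≤ E * (α * β)) :
    (1 - s * t) * (2 - α * s ^ 2 - β * t ^ 2) ≤ E * (2 - s ^ 2 - t ^ 2) := by
  have hs := sq_mul_two_sub_mul_add_sq_le_two hs₀ hs₁ ht₀ ht₁
  have ht := sq_mul_two_sub_mul_add_sq_le_two ht₀ ht₁ hs₀ hs₁
  have hP : 0 ≤ 2 - s ^ 2 - t ^ 2 := by nlinarith
  have hst : 0 ≤ s * t := mul_nonneg hs₀ ht₀
  calc (1 - s * t) * (2 - α * s ^ 2 - β * t ^ 2)
      = (1 - s * t) * (2 - s ^ 2 - t ^ 2) + (1 - α) * ((1 - s * t) * s ^ 2)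
        + (1 - β) * ((1 - t * s) * t ^ 2) := by ring
    _ ≤ (1 - s * t) * (2 - s ^ 2 - t ^ 2) + (1 - α) * (2 - s ^ 2 - t ^ 2)
        + (1 - β) * (2 - s ^ 2 - t ^ 2) := by gcongr <;> linarith
    _ = (3 - s * t - α - β) * (2 - s ^ 2 - t ^ 2) := by ring
    _ ≤ E * (2 - s ^ 2 - t ^ 2) := by
        gcongr
        linarith [three_sub_le_of_one_le_mul hα₀ hα₁ hβ₀ hβ₁ hE]

lemma exp_div_two_mul_sq (x lam : ℝ) : exp (x / (2 * lam)) ^ 2 = exp (x / lam) := by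
  rw [← exp_nat_mul]; ring_nf

lemma integral_one_div_two_mul_mul_exp_neg_div {lam : ℝ} (hlam : lam ≠ 0) (c d : ℝ) :
    ∫ t in c..d, 1 / (2 * lam) * exp (-t / lam) = (exp (-c / lam) - exp (-d / lam)) / 2 := by
  have hderiv (t : ℝ) :
      HasDerivAt (fun u ↦ -exp (-u / lam) / 2) (1 / (2 * lam) * exp (-t / lam)) t := by
    refine (((hasDerivAt_neg t).div_const lam).exp.neg.div_const 2).congr_deriv ?_
    field_simp
  rw [intervalIntegral.integral_eq_sub_of_hasDerivAt (fun t _ ↦ hderiv t)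
    (Continuous.intervalIntegrable (by fun_prop) c d)]
  ring

noncomputable def laplacePDF (lam t : ℝ) : ℝ := 1 / (2 * lam) * exp (-|t| / lam)

namespace laplacePDF

variable {lam a b a' b' η : ℝ}

lemma continuous (lam : ℝ) : Continuous (laplacePDF lam) := by
  unfold laplacePDF; fun_prop

lemma integral_neg (c d : ℝ) :
    ∫ t in c..d, laplacePDF lam t = ∫ t in -d..-c, laplacePDF lam t := by
  simpa [laplacePDF] using intervalIntegral.integral_comp_neg (laplacePDF lam) (a := c) (b := d)

lemma integral_of_nonneg (hlam : lam ≠ 0) {c d : ℝ} (hc : 0 ≤ c) (hcd : c ≤ d) :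
    ∫ t in c..d, laplacePDF lam t = (exp (-c / lam) - exp (-d / lam)) / 2 := by
  rw [← integral_one_div_two_mul_mul_exp_neg_div hlam]
  refine intervalIntegral.integral_congr fun t ht ↦ ?_
  rw [Set.uIcc_of_le hcd] at ht
  simp only [laplacePDF, abs_of_nonneg (hc.trans ht.1)]

lemma integral_of_nonpos_of_nonneg (hlam : lam ≠ 0) {c d : ℝ} (hc : c ≤ 0) (hd : 0 ≤ d) :
    ∫ t in c..d, laplacePDF lam t = 1 - (exp (c / lam) + exp (-d / lam)) / 2 := by
  have hi := (continuous lam).intervalIntegrable (μ := MeasureTheory.volume)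
  rw [← intervalIntegral.integral_add_adjacent_intervals (hi c 0) (hi 0 d), integral_neg c,
    neg_zero, integral_of_nonneg hlam le_rfl (neg_nonneg.2 hc), integral_of_nonneg hlam le_rfl hd]
  simp only [neg_zero, zero_div, exp_zero, neg_neg]
  ring

lemma integral_le_exp_neg_div (hlam : 0 < lam) {c d : ℝ} (hcd : c ≤ d) :
    ∫ t in c..d, laplacePDF lam t ≤ exp (-c / lam) / 2 := by
  calc ∫ t in c..d, laplacePDF lam t
      ≤ ∫ t in c..d, 1 / (2 * lam) * exp (-t / lam) := by
        refine intervalIntegral.integral_mono_on hcd ((continuous lam).intervalIntegrable _ _)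
          (Continuous.intervalIntegrable (by fun_prop) _ _) fun t _ ↦ ?_
        unfold laplacePDF
        gcongr
        exact le_abs_self t
    _ ≤ exp (-c / lam) / 2 := by
        rw [integral_one_div_two_mul_mul_exp_neg_div hlam.ne']
        linarith [exp_pos (-d / lam)]

lemma integral_le_mul_integral_of_nonneg (hlam : 0 < lam) (hab : a < b) (ha : a' ≤ a)
    (hb : b ≤ b') (hη : (b' - a') - (b - a) ≤ η) (ha₀ : 0 ≤ a) :
    ∫ t in a'..b', laplacePDF lam t ≤
      exp (η / lam) / (1 - exp (-(b - a) / (2 * lam))) * ∫ t in a..b, laplacePDF lam t := by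
  have hq2 := exp_div_two_mul_sq (-(b - a)) lam
  set q := exp (-(b - a) / (2 * lam))
  have hq₀ : 0 < q := exp_pos _
  have hq₁ : q < 1 := exp_lt_one_iff.2 (div_neg_of_neg_of_pos (by linarith) (by linarith))
  have hP : ∫ t in a..b, laplacePDF lam t = exp (-a / lam) * (1 - q ^ 2) / 2 := by
    rw [integral_of_nonneg hlam.ne' ha₀ hab.le, hq2, mul_sub, mul_one, ← exp_add]
    ring_nf
  have hP' : ∫ t in a'..b', laplacePDF lam t ≤ exp (η / lam) * exp (-a / lam) / 2 := by
    refine (integral_le_exp_neg_div hlam (by linarith)).trans ?_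
    rw [← exp_add, ← add_div]
    gcongr
    linarith
  rw [div_mul_eq_mul_div, le_div_iff₀ (sub_pos.2 hq₁), hP]
  calc (∫ t in a'..b', laplacePDF lam t) * (1 - q)
      ≤ exp (η / lam) * exp (-a / lam) / 2 * (1 - q) := by gcongr
    _ ≤ exp (η / lam) * (exp (-a / lam) * (1 - q ^ 2) / 2) := by
        have : 0 ≤ exp (η / lam) * exp (-a / lam) * q * (1 - q) :=
          mul_nonneg (by positivity) (by linarith)
        nlinarith

lemma integral_le_mul_integral_of_nonpos (hlam : 0 < lam) (hab : a < b) (ha : a' ≤ a)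
    (hb : b ≤ b') (hη : (b' - a') - (b - a) ≤ η) (hb₀ : b ≤ 0) :
    ∫ t in a'..b', laplacePDF lam t ≤
      exp (η / lam) / (1 - exp (-(b - a) / (2 * lam))) * ∫ t in a..b, laplacePDF lam t := by
  rw [integral_neg a' b', integral_neg a b]
  convert integral_le_mul_integral_of_nonneg (a := -b) (b := -a) (a' := -b') (b' := -a') hlam
    (by linarith) (by linarith) (by linarith) (by linarith) (by linarith) using 5
  ring

lemma integral_le_mul_integral_of_neg_of_pos (hlam : 0 < lam) (ha : a' ≤ a) (hb : b ≤ b')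
    (hη : (b' - a') - (b - a) ≤ η) (ha₀ : a < 0) (hb₀ : 0 < b) :
    ∫ t in a'..b', laplacePDF lam t ≤
      exp (η / lam) / (1 - exp (-(b - a) / (2 * lam))) * ∫ t in a..b, laplacePDF lam t := by
  have hst : exp (a / (2 * lam)) * exp (-b / (2 * lam)) = exp (-(b - a) / (2 * lam)) := by
    rw [← exp_add]; ring_nf
  have hα : exp (a' / lam) = exp (-(a - a') / lam) * exp (a / (2 * lam)) ^ 2 := by
    rw [exp_div_two_mul_sq, ← exp_add]; ring_nf
  have hβ : exp (-b' / lam) = exp (-(b' - b) / lam) * exp (-b / (2 * lam)) ^ 2 := by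
    rw [exp_div_two_mul_sq, ← exp_add]; ring_nf
  have hE : 1 ≤ exp (η / lam) * (exp (-(a - a') / lam) * exp (-(b' - b) / lam)) := by
    rw [← exp_add, ← exp_add, ← add_div, ← add_div]
    exact one_le_exp (div_nonneg (by linarith) hlam.le)
  have key := one_sub_mul_mul_two_sub_le (exp_pos (a / (2 * lam))).le
    (exp_le_one_iff.2 (div_nonpos_of_nonpos_of_nonneg ha₀.le (by positivity)))
    (exp_pos (-b / (2 * lam))).le
    (exp_le_one_iff.2 (div_nonpos_of_nonpos_of_nonneg (by linarith) (by positivity)))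
    (exp_pos _) (exp_le_one_iff.2 (div_nonpos_of_nonpos_of_nonneg (by linarith) hlam.le))
    (exp_pos _) (exp_le_one_iff.2 (div_nonpos_of_nonpos_of_nonneg (by linarith) hlam.le)) hE
  rw [← hα, ← hβ, exp_div_two_mul_sq, exp_div_two_mul_sq, hst] at key
  have hq₁ : exp (-(b - a) / (2 * lam)) < 1 :=
    exp_lt_one_iff.2 (div_neg_of_neg_of_pos (by linarith) (by linarith))
  rw [integral_of_nonpos_of_nonneg hlam.ne' (ha.trans ha₀.le) (by linarith),
    integral_of_nonpos_of_nonneg hlam.ne' ha₀.le hb₀.le, div_mul_eq_mul_div,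
    le_div_iff₀ (sub_pos.2 hq₁)]
  linarith

end laplacePDF

/-- Laplace interval comparison: Let `ν ~ Lap(λ)` with `λ > 0`,
and intervals `[a,b] ⊆ [a',b']` with `η ≥ (b'-a') - (b-a)`. Then
`P[ν ∈ [a',b']] ≤ (e^{η/λ}/(1 - e^{-(b-a)/(2λ)})) · P[ν ∈ [a,b]]`,
with probabilities written via the Laplace density `(1/(2λ))e^{-|t|/λ}`. -/
theorem stmt9 (lam a b a' b' η : ℝ) (hlam : 0 < lam) (hab : a < b)
    (ha : a' ≤ a) (hb : b ≤ b') (hη : (b' - a') - (b - a) ≤ η) :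
    (∫ t in a'..b', (1 / (2 * lam)) * Real.exp (-|t| / lam))
      ≤ (Real.exp (η / lam) / (1 - Real.exp (-(b - a) / (2 * lam)))) *
          ∫ t in a..b, (1 / (2 * lam)) * Real.exp (-|t| / lam) := by
  change ∫ t in a'..b', laplacePDF lam t ≤ _ * ∫ t in a..b, laplacePDF lam t
  rcases le_or_gt 0 a with ha₀ | ha₀
  · exact laplacePDF.integral_le_mul_integral_of_nonneg hlam hab ha hb hη ha₀
  rcases le_or_gt b 0 with hb₀ | hb₀
  · exact laplacePDF.integral_le_mul_integral_of_nonpos hlam hab ha hb hη hb₀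
  · exact laplacePDF.integral_le_mul_integral_of_neg_of_pos hlam ha hb hη ha₀ hb₀
end

section
/- Let M : [T]^n → [T] be an ε-differentially private algorithm that, on any input, outputs an α-approximate median with probability at least 1 − β, where 0 < α < 1/2, 0 < β < 1/2. Then n ≥ Ω((log T + log(1/β))/(αε)); concretely, ε(2αn + 2) ≥ log((1−β)(T−1)/β). -/
/-! With `m < (1/2 - α) n ≤ m + 1`, the dataset `x^t` (`m` copies of the minimum, `m` copies of
the maximum, `t` elsewhere) has `t` as its only approximate median, so `M (x^t)` gives `{t}` mass
at least `1 - β`. Any two of these datasets differ in at most `n - 2m ≤ 2αn + 2` entries, so by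
group privacy `M (x^1)` gives each of the `T - 1` points `t ≠ 1` mass at least
`e^{-ε(n - 2m)} (1 - β)`, while together these points carry mass at most `β`. -/

open MeasureTheory Finset ENNReal

section Privacy

variable {ι X Y : Type*} [MeasurableSpace Y]

/-- `M` is `c`-differentially private, with `c = e^ε` in the usual notation. -/
def DiffPrivate (c : ℝ≥0∞) (M : (ι → X) → Measure Y) : Prop :=
  ∀ x x' : ι → X, (∃ i, ∀ j, j ≠ i → x j = x' j) → ∀ R : Set Y, M x R ≤ c * M x' R

theorem DiffPrivate.le_pow_card_mul [DecidableEq ι] {c : ℝ≥0∞} {M : (ι → X) → Measure Y}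
    (hM : DiffPrivate c M) (s : Finset ι) {x x' : ι → X} (h : ∀ j ∉ s, x j = x' j)
    (R : Set Y) : M x R ≤ c ^ #s * M x' R := by
  induction s using Finset.induction_on generalizing x with
  | empty =>
    obtain rfl : x = x' := funext fun j => h j (notMem_empty j)
    simp
  | @insert a s ha ih =>
    set x₁ := Function.update x a (x' a)
    have hx₁ : M x₁ R ≤ c ^ #s * M x' R := by
      refine ih fun j hj => ?_
      by_cases hja : j = a
      · subst hja; simp [x₁]
      · simp only [x₁, Function.update_of_ne hja]
        exact h j (by simp [hja, hj])
    calc M x R ≤ c * M x₁ R := hM _ _ ⟨a, fun j hj => (Function.update_of_ne hj _ _).symm⟩ R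
      _ ≤ c * (c ^ #s * M x' R) := by gcongr
      _ = c ^ #(insert a s) * M x' R := by rw [card_insert_of_notMem ha, pow_succ']; ring

end Privacy

theorem card_sub_one_mul_le_mul_one_sub {Y : Type*} [Fintype Y] [MeasurableSpace Y]
    [MeasurableSingletonClass Y] (μ : Measure Y) [IsProbabilityMeasure μ] (y₀ : Y)
    {p C : ℝ≥0∞} (hy₀ : p ≤ μ {y₀}) (h : ∀ y, p ≤ C * μ {y}) :
    (Fintype.card Y - 1 : ℕ) * p ≤ C * (1 - p) := by
  classical
  calc ((Fintype.card Y - 1 : ℕ) : ℝ≥0∞) * p = ∑ _y ∈ {y₀}ᶜ, p := by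
        rw [sum_const, card_compl, card_singleton, nsmul_eq_mul]
    _ ≤ ∑ y ∈ {y₀}ᶜ, C * μ {y} := sum_le_sum fun y _ => h y
    _ = C * μ {y₀}ᶜ := by
        rw [← mul_sum, sum_measure_singleton, coe_compl, coe_singleton]
    _ ≤ C * (1 - p) := by
        rw [prob_compl_eq_one_sub (measurableSet_singleton y₀)]
        gcongr

theorem card_filter_le_of_val_mem {n : ℕ} {p : Fin n → Prop} [DecidablePred p] {s : Finset ℕ}
    (h : ∀ i, p i → i.val ∈ s) : #{i | p i} ≤ #s :=
  card_le_card_of_injOn Fin.val (fun i hi => h i (mem_filter.1 hi).2)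
    (fun _ _ _ _ => Fin.ext)

theorem exists_nat_lt_le_add_one {z : ℝ} (hz : 0 < z) : ∃ m : ℕ, (m : ℝ) < z ∧ z ≤ m + 1 := by
  refine ⟨⌈z⌉₊ - 1, ?_, ?_⟩
  · have := Nat.ceil_lt_add_one hz.le
    rw [Nat.cast_sub (Nat.one_le_ceil_iff.2 hz)]
    push_cast
    linarith
  · rw [Nat.cast_sub (Nat.one_le_ceil_iff.2 hz)]
    push_cast
    linarith [Nat.le_ceil z]

section PackingDataset

variable {X : Type*}

/-- The dataset `x^t` of the paper: `m` copies of `a`, then `m` copies of `b`, then `t`. -/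
def packingDataset (n m : ℕ) (a b t : X) : Fin n → X :=
  fun i => if i.val < m then a else if i.val < 2 * m then b else t

theorem packingDataset_congr {n m : ℕ} {a b : X} (t t' : X) {i : Fin n} (hi : i.val < 2 * m) :
    packingDataset n m a b t i = packingDataset n m a b t' i := by
  unfold packingDataset
  split_ifs <;> rfl

theorem DiffPrivate.measure_packingDataset_le {Y : Type*} [MeasurableSpace Y] {n m : ℕ} {a b : X}
    {c : ℝ≥0∞} {M : (Fin n → X) → Measure Y} (hM : DiffPrivate c M) (hc : 1 ≤ c) (t t' : X)
    (R : Set Y) :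
    M (packingDataset n m a b t) R ≤ c ^ (n - 2 * m) * M (packingDataset n m a b t') R := by
  have hs : #{i : Fin n | 2 * m ≤ i.val} ≤ n - 2 * m := by
    simpa using card_filter_le_of_val_mem (s := Ico (2 * m) n) fun i hi => mem_Ico.2 ⟨hi, i.2⟩
  calc M (packingDataset n m a b t) R
      ≤ c ^ #{i : Fin n | 2 * m ≤ i.val} * M (packingDataset n m a b t') R :=
        hM.le_pow_card_mul _ (fun i hi => packingDataset_congr _ _ (by simpa using hi)) R
    _ ≤ c ^ (n - 2 * m) * M (packingDataset n m a b t') R := by gcongr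

variable [LinearOrder X]

/-- At least `q` entries of `x` lie on each side of `y`; an `α`-approximate median is the case
`q = (1/2 - α) n`. -/
def IsApproxMedian {n : ℕ} (q : ℝ) (x : Fin n → X) (y : X) : Prop :=
  q ≤ #{i | x i ≤ y} ∧ q ≤ #{i | y ≤ x i}

theorem eq_of_isApproxMedian_packingDataset {n m : ℕ} {q : ℝ} {a b t y : X} (hm : (m : ℝ) < q)
    (hat : a ≤ t) (htb : t ≤ b) (hy : IsApproxMedian q (packingDataset n m a b t) y) : y = t := by
  obtain ⟨hle, hge⟩ := hy
  rcases lt_trichotomy y t with hyt | rfl | hty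
  · have : #{i | packingDataset n m a b t i ≤ y} ≤ #(range m) :=
      card_filter_le_of_val_mem fun i hi => by
        unfold packingDataset at hi
        split_ifs at hi with h₁ h₂
        exacts [mem_range.2 h₁, by order, by order]
    rw [card_range] at this
    exact absurd hle (not_le.2 (lt_of_le_of_lt (by exact_mod_cast this) hm))
  · rfl
  · have : #{i | y ≤ packingDataset n m a b t i} ≤ #(Ico m (2 * m)) :=
      card_filter_le_of_val_mem fun i hi => by
        unfold packingDataset at hi
        split_ifs at hi with h₁ h₂
        exacts [by order, mem_Ico.2 ⟨not_lt.1 h₁, h₂⟩, by order]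
    rw [Nat.card_Ico, two_mul, Nat.add_sub_cancel] at this
    exact absurd hge (not_le.2 (lt_of_le_of_lt (by exact_mod_cast this) hm))

end PackingDataset

theorem natCast_mul_le_exp_mul_of_le {N k : ℕ} {β ε : ℝ} (hβ₀ : 0 ≤ β) (hβ₁ : β ≤ 1)
    (h : (N : ℝ≥0∞) * ENNReal.ofReal (1 - β) ≤
      ENNReal.ofReal (Real.exp ε) ^ k * (1 - ENNReal.ofReal (1 - β))) :
    N * (1 - β) ≤ Real.exp (k * ε) * β := by
  have hβ : 0 ≤ 1 - β := by linarith
  rw [← ENNReal.ofReal_one, ← ENNReal.ofReal_sub _ hβ, show (1 : ℝ) - (1 - β) = β by ring,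
    ← ENNReal.ofReal_natCast, ← ENNReal.ofReal_mul (Nat.cast_nonneg N),
    ← ENNReal.ofReal_pow (Real.exp_nonneg ε), ← Real.exp_nat_mul,
    ← ENNReal.ofReal_mul (Real.exp_nonneg _)] at h
  exact (ENNReal.ofReal_le_ofReal_iff (by positivity)).1 h

/-- packing lower bound for private approximate medians:
If `M : [T]^n → [T]` is ε-differentially private and outputs an α-approximate
median with probability at least `1 - β` on every input, then
`ε(2αn + 2) ≥ log((1-β)(T-1)/β)` (so `n ≥ Ω((log T + log(1/β))/(αε))`). -/
theorem stmt10 (T n : ℕ) (hT : 2 ≤ T) (hn : 1 ≤ n) (α β ε : ℝ)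
    (hα0 : 0 < α) (hα : α < 1 / 2) (hβ0 : 0 < β) (hβ : β < 1 / 2) (hε : 0 < ε)
    (M : (Fin n → Fin T) → Measure (Fin T))
    (hprob : ∀ x, IsProbabilityMeasure (M x))
    (hdp : ∀ x x' : Fin n → Fin T, (∃ i, ∀ j, j ≠ i → x j = x' j) →
      ∀ R : Set (Fin T), M x R ≤ ENNReal.ofReal (Real.exp ε) * M x' R)
    (hacc : ∀ x : Fin n → Fin T,
      ENNReal.ofReal (1 - β) ≤ M x {y : Fin T |
        (1 / 2 - α) * n ≤ ((Finset.univ.filter (fun i => x i ≤ y)).card : ℝ) ∧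
        (1 / 2 - α) * n ≤ ((Finset.univ.filter (fun i => y ≤ x i)).card : ℝ)}) :
    Real.log ((1 - β) * ((T : ℝ) - 1) / β) ≤ ε * (2 * α * n + 2) := by
  have hn' : (1 : ℝ) ≤ n := by exact_mod_cast hn
  obtain ⟨m, hmq, hqm⟩ := exists_nat_lt_le_add_one (z := (1 / 2 - α) * n) (by nlinarith)
  have h2m : 2 * m ≤ n := by exact_mod_cast (by nlinarith : (2 * m : ℝ) ≤ n)
  let lo : Fin T := ⟨0, by omega⟩
  let x : Fin T → Fin n → Fin T := packingDataset n m lo ⟨T - 1, by omega⟩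
  have hx : ∀ t, ENNReal.ofReal (1 - β) ≤ M (x t) {t} := fun t =>
    (hacc (x t)).trans <| measure_mono fun y hy =>
      eq_of_isApproxMedian_packingDataset hmq (Nat.zero_le t.val) (Nat.le_sub_one_of_lt t.2) hy
  have hpack := card_sub_one_mul_le_mul_one_sub (M (x lo)) lo (hx lo) fun t => (hx t).trans <|
    DiffPrivate.measure_packingDataset_le hdp (one_le_ofReal.2 (Real.one_le_exp hε.le)) _ _ _
  rw [Fintype.card_fin] at hpack
  have hreal := natCast_mul_le_exp_mul_of_le hβ0.le (by linarith) hpack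
  rw [Nat.cast_sub (by omega : 1 ≤ T), Nat.cast_sub h2m, Nat.cast_one, Nat.cast_mul,
    Nat.cast_two] at hreal
  have hT' : (2 : ℝ) ≤ T := by exact_mod_cast hT
  rw [Real.log_le_iff_le_exp (by apply div_pos <;> nlinarith), div_le_iff₀ hβ0]
  calc (1 - β) * ((T : ℝ) - 1) ≤ Real.exp ((n - 2 * m : ℝ) * ε) * β := by linarith
    _ ≤ Real.exp (ε * (2 * α * n + 2)) * β := by gcongr Real.exp ?_ * _; nlinarith
end
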